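/- Over any ring, every ℵ₁-projective module is Mittag-Leffler. -/

import Mathlib

/-!
For a finite tuple `m` in `M`, the vanishing of `∑ νₖ ⊗ mₖ` in `N ⊗ M` is a consequence of
finitely many defining relations, so it already holds over a finitely generated submodule.
Closing up countably often yields a countably generated, hence projective, submodule `A ∋ m`
over which every such vanishing already holds: otherwise an `ω`-chain of counterexamples would
have a projective union `B`, and the universal tuple in the cokernel of
`Hom(B, R) → (Rᵐᵒᵖ)^κ`, through which every tuple vanishing over `B` factors, would vanish at a
finite stage of the chain. Projective modules are Mittag-Leffler by the dual basis lemma, so an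
element of `(∏ Nᵢ) ⊗ M` killed by the canonical map comes from `(∏ Nᵢ) ⊗ A`, is killed there,
and hence is zero.
-/

open MulOpposite

section CTensor
variable (R : Type) [Ring R]
variable (N : Type) [AddCommGroup N] [Module Rᵐᵒᵖ N]
variable (M : Type) [AddCommGroup M] [Module R M]

def tensorRels : AddSubgroup (FreeAbelianGroup (N × M)) :=
  AddSubgroup.closure
    {x | (∃ n n' m, x = FreeAbelianGroup.of (n + n', m) - FreeAbelianGroup.of (n, m) -
            FreeAbelianGroup.of (n', m)) ∨
         (∃ n m m', x = FreeAbelianGroup.of (n, m + m') - FreeAbelianGroup.of (n, m) -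
            FreeAbelianGroup.of (n, m')) ∨
         (∃ (r : R) (n : N) (m : M), x = FreeAbelianGroup.of (op r • n, m) -
            FreeAbelianGroup.of (n, r • m))}

abbrev CTensor : Type := FreeAbelianGroup (N × M) ⧸ tensorRels R N M

def ctmul (n : N) (m : M) : CTensor R N M :=
  QuotientAddGroup.mk (FreeAbelianGroup.of (n, m))

variable {R N M}

theorem ctmul_add_left (n n' : N) (m : M) :
    ctmul R N M (n + n') m = ctmul R N M n m + ctmul R N M n' m := by
  rw [eq_comm, ← sub_eq_zero]
  show QuotientAddGroup.mk _ + QuotientAddGroup.mk _ - QuotientAddGroup.mk _ = (0 : CTensor R N M)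
  rw [← QuotientAddGroup.mk_add, ← QuotientAddGroup.mk_sub, QuotientAddGroup.eq_zero_iff]
  have h : FreeAbelianGroup.of (n, m) + FreeAbelianGroup.of (n', m) -
      FreeAbelianGroup.of (n + n', m) =
      -(FreeAbelianGroup.of (n + n', m) - FreeAbelianGroup.of (n, m) -
        FreeAbelianGroup.of (n', m)) := by abel
  rw [h]
  exact neg_mem (AddSubgroup.subset_closure (Or.inl ⟨n, n', m, rfl⟩))

theorem ctmul_add_right (n : N) (m m' : M) :
    ctmul R N M n (m + m') = ctmul R N M n m + ctmul R N M n m' := by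
  rw [eq_comm, ← sub_eq_zero]
  show QuotientAddGroup.mk _ + QuotientAddGroup.mk _ - QuotientAddGroup.mk _ = (0 : CTensor R N M)
  rw [← QuotientAddGroup.mk_add, ← QuotientAddGroup.mk_sub, QuotientAddGroup.eq_zero_iff]
  have h : FreeAbelianGroup.of (n, m) + FreeAbelianGroup.of (n, m') -
      FreeAbelianGroup.of (n, m + m') =
      -(FreeAbelianGroup.of (n, m + m') - FreeAbelianGroup.of (n, m) -
        FreeAbelianGroup.of (n, m')) := by abel
  rw [h]
  exact neg_mem (AddSubgroup.subset_closure (Or.inr (Or.inl ⟨n, m, m', rfl⟩)))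

theorem ctmul_smul (r : R) (n : N) (m : M) :
    ctmul R N M (op r • n) m = ctmul R N M n (r • m) := by
  rw [← sub_eq_zero]
  show QuotientAddGroup.mk _ - QuotientAddGroup.mk _ = (0 : CTensor R N M)
  rw [← QuotientAddGroup.mk_sub, QuotientAddGroup.eq_zero_iff]
  apply AddSubgroup.subset_closure
  right; right
  exact ⟨r, n, m, rfl⟩

variable (R N M)

/-- Universal property: lift a balanced biadditive map to the balanced tensor product. -/
def ctlift {A : Type} [AddCommGroup A] (f : N → M → A)
    (h1 : ∀ n n' m, f (n + n') m = f n m + f n' m)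
    (h2 : ∀ n m m', f n (m + m') = f n m + f n m')
    (h3 : ∀ (r : R) n m, f (op r • n) m = f n (r • m)) :
    CTensor R N M →+ A :=
  QuotientAddGroup.lift _ (FreeAbelianGroup.lift fun p => f p.1 p.2) (by
    rw [tensorRels, AddSubgroup.closure_le]
    rintro x (⟨n, n', m, rfl⟩ | ⟨n, m, m', rfl⟩ | ⟨r, n, m, rfl⟩) <;>
      simp [AddMonoidHom.mem_ker, FreeAbelianGroup.lift_apply_of, h1, h2, h3])

@[simp] theorem ctlift_ctmul {A : Type} [AddCommGroup A] (f : N → M → A) (h1) (h2) (h3)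
    (n : N) (m : M) : ctlift R N M f h1 h2 h3 (ctmul R N M n m) = f n m := by
  simp [ctlift, ctmul, QuotientAddGroup.lift_mk, FreeAbelianGroup.lift_apply_of]

end CTensor

section Maps
variable (R : Type) [Ring R]

/-- Functoriality of the balanced tensor product in the right-module variable. -/
def ctmapLeft {N N' : Type} [AddCommGroup N] [Module Rᵐᵒᵖ N] [AddCommGroup N']
    [Module Rᵐᵒᵖ N'] (f : N →ₗ[Rᵐᵒᵖ] N') (M : Type) [AddCommGroup M] [Module R M] :
    CTensor R N M →+ CTensor R N' M :=
  ctlift R N M (fun n m => ctmul R N' M (f n) m)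
    (fun n n' m => by rw [map_add, ctmul_add_left])
    (fun n m m' => by rw [ctmul_add_right])
    (fun r n m => by rw [map_smul, ctmul_smul])

/-- Functoriality of the balanced tensor product in the left-module variable. -/
def ctmapRight (N : Type) [AddCommGroup N] [Module Rᵐᵒᵖ N] {M M' : Type} [AddCommGroup M]
    [Module R M] [AddCommGroup M'] [Module R M'] (f : M →ₗ[R] M') :
    CTensor R N M →+ CTensor R N M' :=
  ctlift R N M (fun n m => ctmul R N M' n (f m))
    (fun n n' m => by rw [ctmul_add_left])
    (fun n m m' => by rw [map_add, ctmul_add_right])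
    (fun r n m => by rw [ctmul_smul, map_smul])

/-- The canonical map `(∏ i, N i) ⊗ M → ∏ i, (N i ⊗ M)`. -/
def ctCanonical {ι : Type} (N : ι → Type) [∀ i, AddCommGroup (N i)]
    [∀ i, Module Rᵐᵒᵖ (N i)] (M : Type) [AddCommGroup M] [Module R M] :
    CTensor R (∀ i, N i) M →+ ∀ i, CTensor R (N i) M :=
  ctlift R (∀ i, N i) M (fun n m i => ctmul R (N i) M (n i) m)
    (fun n n' m => by funext i; exact ctmul_add_left _ _ _)
    (fun n m m' => by funext i; exact ctmul_add_right _ _ _)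
    (fun r n m => by funext i; exact ctmul_smul _ _ _)

end Maps

/-- A submodule is countably generated if it is the span of a countable set. -/
def CountablyGenerated (R : Type) {M : Type} [Ring R] [AddCommGroup M] [Module R M]
    (A : Submodule R M) : Prop :=
  ∃ S : Set M, S.Countable ∧ Submodule.span R S = A

/-- A left `R`-module `M` is Mittag-Leffler if for every family `(Nᵢ)` of right `R`-modules the
canonical map `(∏ i, Nᵢ) ⊗_R M → ∏ i, (Nᵢ ⊗_R M)` is injective. -/
def IsMittagLeffler (R : Type) [Ring R] (M : Type) [AddCommGroup M] [Module R M] : Prop :=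
  ∀ (ι : Type) (N : ι → ModuleCat Rᵐᵒᵖ),
    Function.Injective (ctCanonical R (fun i => ↥(N i)) M)

theorem FreeAbelianGroup.map_injective {α β : Type*} {f : α → β} (hf : Function.Injective f) :
    Function.Injective (FreeAbelianGroup.map f) := by
  rcases isEmpty_or_nonempty α with hα | hα
  · exact fun x y _ => Subsingleton.elim x y
  · refine Function.LeftInverse.injective (g := FreeAbelianGroup.map (Function.invFun f))
      fun x => ?_
    rw [← AddMonoidHom.comp_apply, ← FreeAbelianGroup.map_comp, Function.invFun_comp hf,
      FreeAbelianGroup.map_id, AddMonoidHom.id_apply]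

section CTensorLemmas

variable {R : Type} [Ring R] {N : Type} [AddCommGroup N] [Module Rᵐᵒᵖ N]
  {M : Type} [AddCommGroup M] [Module R M]

theorem ctmul_zero_left (m : M) : ctmul R N M 0 m = 0 :=
  (AddMonoidHom.mk' (ctmul R N M · m) (ctmul_add_left · · m)).map_zero

theorem ctmul_neg_left (n : N) (m : M) : ctmul R N M (-n) m = -ctmul R N M n m :=
  (AddMonoidHom.mk' (ctmul R N M · m) (ctmul_add_left · · m)).map_neg n

theorem ctmul_sum_left {κ : Type} (s : Finset κ) (n : κ → N) (m : M) :
    ctmul R N M (∑ k ∈ s, n k) m = ∑ k ∈ s, ctmul R N M (n k) m :=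
  map_sum (AddMonoidHom.mk' (ctmul R N M · m) (ctmul_add_left · · m)) n s

theorem ctmul_sum_right {κ : Type} (s : Finset κ) (n : N) (m : κ → M) :
    ctmul R N M n (∑ k ∈ s, m k) = ∑ k ∈ s, ctmul R N M n (m k) :=
  map_sum (AddMonoidHom.mk' (ctmul R N M n) (ctmul_add_right n)) m s

@[simp] theorem ctmapLeft_ctmul {N' : Type} [AddCommGroup N'] [Module Rᵐᵒᵖ N']
    (f : N →ₗ[Rᵐᵒᵖ] N') (n : N) (m : M) :
    ctmapLeft R f M (ctmul R N M n m) = ctmul R N' M (f n) m :=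
  ctlift_ctmul ..

@[simp] theorem ctmapRight_ctmul {M' : Type} [AddCommGroup M'] [Module R M']
    (f : M →ₗ[R] M') (n : N) (m : M) :
    ctmapRight R N f (ctmul R N M n m) = ctmul R N M' n (f m) :=
  ctlift_ctmul ..

@[simp] theorem ctCanonical_ctmul {ι : Type} (N : ι → Type) [∀ i, AddCommGroup (N i)]
    [∀ i, Module Rᵐᵒᵖ (N i)] (n : ∀ i, N i) (m : M) :
    ctCanonical R N M (ctmul R (∀ i, N i) M n m) = fun i => ctmul R (N i) M (n i) m :=
  ctlift_ctmul ..

theorem exists_eq_sum_ctmul (x : CTensor R N M) :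
    ∃ (d : ℕ) (n : Fin d → N) (m : Fin d → M), x = ∑ k, ctmul R N M (n k) (m k) := by
  induction x using QuotientAddGroup.induction_on with | H z => ?_
  induction z using FreeAbelianGroup.induction_on with
  | zero => exact ⟨0, Fin.elim0, Fin.elim0, by simp⟩
  | of p => exact ⟨1, fun _ => p.1, fun _ => p.2, by simp [ctmul]⟩
  | neg p _ =>
    refine ⟨1, fun _ => -p.1, fun _ => p.2, ?_⟩
    simp only [Finset.univ_unique, Finset.sum_singleton, ctmul_neg_left]
    rfl
  | add z w hz hw =>
    obtain ⟨d, n, m, hz⟩ := hz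
    obtain ⟨d', n', m', hw⟩ := hw
    refine ⟨d + d', Fin.append n n', Fin.append m m', ?_⟩
    rw [QuotientAddGroup.mk_add, hz, hw, Fin.sum_univ_add]
    simp only [Fin.append_left, Fin.append_right]

end CTensorLemmas

section Relations

open FreeAbelianGroup

variable (R : Type) [Ring R] (N : Type) [AddCommGroup N] [Module Rᵐᵒᵖ N]
  {M : Type} [AddCommGroup M] [Module R M]

def relationsAt (a b : M) : Set (FreeAbelianGroup (N × M)) :=
  {x | (∃ n n', x = of (n + n', a) - of (n, a) - of (n', a)) ∨
    (∃ n, x = of (n, a + b) - of (n, a) - of (n, b)) ∨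
    ∃ (r : R) (n : N), x = of (op r • n, a) - of (n, r • a)}

def relationsOn (S : Set M) : AddSubgroup (FreeAbelianGroup (N × M)) :=
  AddSubgroup.closure {x | ∃ a ∈ S, ∃ b ∈ S, x ∈ relationsAt R N a b}

variable {R N}

theorem relationsOn_mono {S T : Set M} (h : S ⊆ T) : relationsOn R N S ≤ relationsOn R N T :=
  AddSubgroup.closure_mono fun _ ⟨a, ha, b, hb, hx⟩ => ⟨a, h ha, b, h hb, hx⟩

theorem relationsOn_univ : relationsOn R N (Set.univ : Set M) = tensorRels R N M := by
  unfold relationsOn relationsAt tensorRels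
  congr 1
  ext x
  simp only [Set.mem_univ, true_and, Set.mem_ofPred_eq]
  constructor
  · rintro ⟨a, b, ⟨n, n', rfl⟩ | ⟨n, rfl⟩ | ⟨r, n, rfl⟩⟩
    exacts [Or.inl ⟨n, n', a, rfl⟩, Or.inr (Or.inl ⟨n, a, b, rfl⟩), Or.inr (Or.inr ⟨r, n, a, rfl⟩)]
  · rintro (⟨n, n', a, rfl⟩ | ⟨n, a, b, rfl⟩ | ⟨r, n, a, rfl⟩)
    exacts [⟨a, a, Or.inl ⟨n, n', rfl⟩⟩, ⟨a, b, Or.inr (Or.inl ⟨n, rfl⟩)⟩,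
      ⟨a, a, Or.inr (Or.inr ⟨r, n, rfl⟩)⟩]

theorem exists_finset_of_mem_relationsOn {S : Set M} {z : FreeAbelianGroup (N × M)}
    (hz : z ∈ relationsOn R N S) : ∃ F : Finset M, ↑F ⊆ S ∧ z ∈ relationsOn R N (F : Set M) := by
  classical
  induction hz using AddSubgroup.closure_induction with
  | mem x hx =>
    obtain ⟨a, ha, b, hb, hx⟩ := hx
    refine ⟨{a, b}, by simp [Set.insert_subset_iff, ha, hb], AddSubgroup.subset_closure ?_⟩
    exact ⟨a, by simp, b, by simp, hx⟩
  | zero => exact ⟨∅, by simp, zero_mem _⟩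
  | add x y _ _ hx hy =>
    obtain ⟨F, hFS, hF⟩ := hx
    obtain ⟨G, hGS, hG⟩ := hy
    refine ⟨F ∪ G, by simp [hFS, hGS], add_mem ?_ ?_⟩
    · exact relationsOn_mono (by simp) hF
    · exact relationsOn_mono (by simp) hG
  | neg x _ hx =>
    obtain ⟨F, hFS, hF⟩ := hx
    exact ⟨F, hFS, neg_mem hF⟩

theorem image_relationsAt_subtype (A : Submodule R M) (a b : A) :
    map (Prod.map id Subtype.val) '' relationsAt R N a b = relationsAt R N (a : M) b := by
  ext x
  simp only [relationsAt, Set.mem_image, Set.mem_ofPred_eq]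
  constructor
  · rintro ⟨y, ⟨n, n', rfl⟩ | ⟨n, rfl⟩ | ⟨r, n, rfl⟩, rfl⟩
    exacts [Or.inl ⟨n, n', by simp⟩, Or.inr (Or.inl ⟨n, by simp⟩), Or.inr (Or.inr ⟨r, n, by simp⟩)]
  · rintro (⟨n, n', rfl⟩ | ⟨n, rfl⟩ | ⟨r, n, rfl⟩)
    exacts [⟨_, Or.inl ⟨n, n', rfl⟩, by simp⟩, ⟨_, Or.inr (Or.inl ⟨n, rfl⟩), by simp⟩,
      ⟨_, Or.inr (Or.inr ⟨r, n, rfl⟩), by simp⟩]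

theorem map_tensorRels_subtype (A : Submodule R M) :
    (tensorRels R N A).map (map (Prod.map id Subtype.val)) = relationsOn R N (A : Set M) := by
  rw [← relationsOn_univ, relationsOn, AddMonoidHom.map_closure, relationsOn]
  congr 1
  ext x
  simp only [Set.mem_image, Set.mem_ofPred_eq, Set.mem_univ, true_and, SetLike.mem_coe]
  constructor
  · rintro ⟨y, ⟨a, b, hy⟩, rfl⟩
    exact ⟨a, a.2, b, b.2, image_relationsAt_subtype (N := N) A a b ▸ Set.mem_image_of_mem _ hy⟩
  · rintro ⟨a, ha, b, hb, hx⟩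
    rw [show a = (⟨a, ha⟩ : A) from rfl, show b = (⟨b, hb⟩ : A) from rfl,
      ← image_relationsAt_subtype] at hx
    obtain ⟨y, hy, rfl⟩ := hx
    exact ⟨y, ⟨_, _, hy⟩, rfl⟩

end Relations

section Vanishing

open FreeAbelianGroup

variable {R : Type} [Ring R] {N : Type} [AddCommGroup N] [Module Rᵐᵒᵖ N]
  {M : Type} [AddCommGroup M] [Module R M] {κ : Type} [Fintype κ]
  {ν : κ → N} {m : κ → M} {A : Submodule R M}

def VanishesIn (ν : κ → N) (m : κ → M) (A : Submodule R M) : Prop :=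
  ∑ k, of (ν k, m k) ∈ relationsOn R N (A : Set M)

theorem VanishesIn.mono {B : Submodule R M} (hAB : A ≤ B) (h : VanishesIn ν m A) :
    VanishesIn ν m B :=
  relationsOn_mono hAB h

theorem vanishesIn_top_iff :
    VanishesIn ν m (⊤ : Submodule R M) ↔ ∑ k, ctmul R N M (ν k) (m k) = 0 := by
  rw [VanishesIn, Submodule.top_coe, relationsOn_univ, ← QuotientAddGroup.eq_zero_iff,
    QuotientAddGroup.mk_sum]
  rfl

theorem vanishesIn_iff (hm : ∀ k, m k ∈ A) :
    VanishesIn ν m A ↔ ∑ k, ctmul R N A (ν k) ⟨m k, hm k⟩ = 0 := by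
  have hsum : ∑ k, of (ν k, m k) =
      map (Prod.map id Subtype.val) (∑ k, of (ν k, (⟨m k, hm k⟩ : A))) := by
    simp [map_sum]
  have hinj : Function.Injective (map (Prod.map (id : N → N) (Subtype.val : A → M))) :=
    map_injective (Function.injective_id.prodMap Subtype.val_injective)
  rw [VanishesIn, hsum, ← map_tensorRels_subtype, AddSubgroup.mem_map_iff_mem hinj,
    ← QuotientAddGroup.eq_zero_iff, QuotientAddGroup.mk_sum]
  rfl

theorem VanishesIn.exists_finset (h : VanishesIn ν m A) :
    ∃ F : Finset M, ↑F ⊆ (A : Set M) ∧ VanishesIn ν m (Submodule.span R F) := by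
  obtain ⟨F, hFA, hF⟩ := exists_finset_of_mem_relationsOn h
  exact ⟨F, hFA, relationsOn_mono Submodule.subset_span hF⟩

theorem VanishesIn.exists_of_iSup (A : ℕ →o Submodule R M) (h : VanishesIn ν m (⨆ n, A n)) :
    ∃ s, VanishesIn ν m (A s) := by
  obtain ⟨F, hF, hvan⟩ := h.exists_finset
  rw [Submodule.coe_iSup_of_chain] at hF
  have hdir : Directed (· ⊆ ·) fun n => (A n : Set M) := fun i j =>
    ⟨max i j, A.monotone (le_max_left i j), A.monotone (le_max_right i j)⟩
  obtain ⟨s, hs⟩ := hdir.exists_mem_subset_of_finset_subset_biUnion hF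
  exact ⟨s, hvan.mono (Submodule.span_le.2 hs)⟩

theorem VanishesIn.map_left {N' : Type} [AddCommGroup N'] [Module Rᵐᵒᵖ N']
    (g : N →ₗ[Rᵐᵒᵖ] N') (hm : ∀ k, m k ∈ A) (h : VanishesIn ν m A) :
    VanishesIn (fun k => g (ν k)) m A := by
  rw [vanishesIn_iff hm] at h ⊢
  simpa [map_sum] using congrArg (ctmapLeft R g A) h

end Vanishing

section Projective

variable {R : Type} [Ring R] {N : Type} [AddCommGroup N] [Module Rᵐᵒᵖ N]
  {P : Type} [AddCommGroup P] [Module R P] {κ : Type} [Fintype κ]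

theorem sum_op_smul_eq_zero_of_sum_ctmul_eq_zero {ν : κ → N} {p : κ → P}
    (h : ∑ k, ctmul R N P (ν k) (p k) = 0) (f : P →ₗ[R] R) : ∑ k, op (f (p k)) • ν k = 0 := by
  have := congrArg (ctlift R N P (fun n a => op (f a) • n) (fun _ _ _ => smul_add _ _ _)
    (fun n a a' => by rw [map_add, op_add, add_smul])
    (fun r n a => by rw [map_smul, smul_smul, smul_eq_mul, op_mul])) h
  simpa [map_sum] using this

theorem sum_ctmul_eq_zero_iff [Module.Projective R P] {ν : κ → N} {p : κ → P} :
    ∑ k, ctmul R N P (ν k) (p k) = 0 ↔ ∀ f : P →ₗ[R] R, ∑ k, op (f (p k)) • ν k = 0 := by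
  classical
  refine ⟨sum_op_smul_eq_zero_of_sum_ctmul_eq_zero, fun h => ?_⟩
  obtain ⟨s, hs⟩ := Module.projective_def.1 ‹_›
  let T := Finset.univ.biUnion fun k => (s (p k)).support
  have hp : ∀ k, p k = ∑ y ∈ T, s (p k) y • y := fun k => by
    conv_lhs => rw [← hs (p k)]
    exact Finsupp.sum_of_support_subset _
      (Finset.subset_biUnion_of_mem (fun k => (s (p k)).support) (Finset.mem_univ k)) _
      fun _ _ => zero_smul R _
  calc ∑ k, ctmul R N P (ν k) (p k)
      = ∑ k, ∑ y ∈ T, ctmul R N P (op (s (p k) y) • ν k) y := Finset.sum_congr rfl fun k _ => by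
        conv_lhs => rw [hp k]
        simp only [ctmul_sum_right, ctmul_smul]
    _ = ∑ y ∈ T, ctmul R N P (∑ k, op ((Finsupp.lapply y ∘ₗ s) (p k)) • ν k) y := by
        rw [Finset.sum_comm]
        simp only [ctmul_sum_left]
        rfl
    _ = 0 := Finset.sum_eq_zero fun y _ => by rw [h, ctmul_zero_left]

theorem isMittagLeffler_of_projective [Module.Projective R P] : IsMittagLeffler R P := by
  intro ι N
  rw [injective_iff_map_eq_zero]
  intro x hx
  obtain ⟨d, n, p, rfl⟩ := exists_eq_sum_ctmul x
  refine sum_ctmul_eq_zero_iff.2 fun f => funext fun i => ?_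
  have hi : ∑ k, ctmul R (N i) P (n k i) (p k) = 0 := by simpa [map_sum] using congrFun hx i
  simpa using sum_ctmul_eq_zero_iff.1 hi f

variable (R) (p : κ → P)

def evalRange : Submodule Rᵐᵒᵖ (κ → Rᵐᵒᵖ) :=
  Submodule.span Rᵐᵒᵖ (Set.range fun f : P →ₗ[R] R => fun k => op (f (p k)))

abbrev EvalCoker : Type := (κ → Rᵐᵒᵖ) ⧸ evalRange R p

def EvalCoker.gen [DecidableEq κ] (k : κ) : EvalCoker R p :=
  Submodule.Quotient.mk (Pi.single k 1)

theorem sum_ctmul_evalCokerGen_eq_zero [Module.Projective R P] [DecidableEq κ] :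
    ∑ k, ctmul R (EvalCoker R p) P (EvalCoker.gen R p k) (p k) = 0 := by
  refine sum_ctmul_eq_zero_iff.2 fun f => ?_
  have hsum :
      ∑ k, op (f (p k)) • EvalCoker.gen R p k = (evalRange R p).mkQ fun k => op (f (p k)) := by
    simp only [EvalCoker.gen, ← Submodule.mkQ_apply, ← map_smul, ← map_sum, ← Pi.single_smul,
      smul_eq_mul, mul_one, Finset.univ_sum_single]
  rw [hsum, Submodule.mkQ_apply, Submodule.Quotient.mk_eq_zero]
  exact Submodule.subset_span ⟨f, rfl⟩

theorem EvalCoker.exists_lift [DecidableEq κ] {ν : κ → N}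
    (hν : ∀ f : P →ₗ[R] R, ∑ k, op (f (p k)) • ν k = 0) :
    ∃ g : EvalCoker R p →ₗ[Rᵐᵒᵖ] N, ∀ k, g (gen R p k) = ν k := by
  refine ⟨(evalRange R p).liftQ (Fintype.linearCombination Rᵐᵒᵖ ν) ?_, fun k => ?_⟩
  · rw [evalRange, Submodule.span_le]
    rintro _ ⟨f, rfl⟩
    exact hν f
  · simp [gen, Fintype.linearCombination_apply_single]

end Projective

theorem exists_subset_of_chain_stabilizes {α W : Type*} [CompleteLattice α] {C : Set α}
    {V : α → Set W} {T : Set W} (hV : Monotone V) (hC : C.Nonempty)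
    (hext : ∀ a ∈ C, ∀ w ∈ T, ∃ b ∈ C, a ≤ b ∧ w ∈ V b)
    (hstab : ∀ A : ℕ →o α, (∀ n, A n ∈ C) → ∃ s, V (⨆ n, A n) ⊆ V (A s)) :
    ∃ a ∈ C, T ⊆ V a := by
  by_contra! hbad
  have hstep : ∀ a : C, ∃ b : C, a.1 ≤ b.1 ∧ ∃ w ∈ V b, w ∉ V a := by
    rintro ⟨a, ha⟩
    obtain ⟨w, hwT, hwa⟩ := Set.not_subset.1 (hbad a ha)
    obtain ⟨b, hb, hab, hwb⟩ := hext a ha w hwT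
    exact ⟨⟨b, hb⟩, hab, w, hwb, hwa⟩
  choose next hle w hw hw' using hstep
  obtain ⟨a₀, ha₀⟩ := hC
  let A : ℕ → C := fun n => next^[n] ⟨a₀, ha₀⟩
  have hA_succ : ∀ n, A (n + 1) = next (A n) := fun n => Function.iterate_succ_apply' ..
  have hA : Monotone fun n => (A n : α) :=
    monotone_nat_of_le_succ fun n => hA_succ n ▸ hle (A n)
  obtain ⟨s, hs⟩ := hstab ⟨_, hA⟩ fun n => (A n).2
  exact hw' (A s) (hs (hV (le_iSup (fun n => (A n : α)) (s + 1)) (hA_succ s ▸ hw (A s))))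

section Aleph1Projective

variable {R : Type} [Ring R] {M : Type} [AddCommGroup M] [Module R M]

theorem CountablyGenerated.sup_span_finset {A : Submodule R M} (hA : CountablyGenerated R A)
    (F : Finset M) : CountablyGenerated R (A ⊔ Submodule.span R F) := by
  obtain ⟨S, hS, rfl⟩ := hA
  exact ⟨S ∪ F, hS.union F.countable_toSet, Submodule.span_union S F⟩

theorem countablyGenerated_iSup {ι : Type} [Countable ι] {A : ι → Submodule R M}
    (hA : ∀ i, CountablyGenerated R (A i)) : CountablyGenerated R (⨆ i, A i) := by
  choose S hS hspan using hA
  exact ⟨⋃ i, S i, Set.countable_iUnion hS, by rw [Submodule.span_iUnion]; exact iSup_congr hspan⟩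

variable {κ : Type} [Fintype κ] {m : κ → M}

theorem exists_vanishesIn_of_iSup_of_projective (A : ℕ →o Submodule R M) (hm : ∀ k, m k ∈ A 0)
    [Module.Projective R ↥(⨆ n, A n)] :
    ∃ s, ∀ (N : Type) [AddCommGroup N] [Module Rᵐᵒᵖ N] (ν : κ → N),
      VanishesIn ν m (⨆ n, A n) → VanishesIn ν m (A s) := by
  classical
  have hmA : ∀ k, m k ∈ ⨆ n, A n := fun k => le_iSup A 0 (hm k)
  let p : κ → ↥(⨆ n, A n) := fun k => ⟨m k, hmA k⟩
  -- The universal tuple vanishes over some `A s`, and every tuple vanishing over `⨆ n, A n`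
  -- is a linear image of it.
  obtain ⟨s, hs⟩ := ((vanishesIn_iff hmA).2 (sum_ctmul_evalCokerGen_eq_zero R p)).exists_of_iSup A
  refine ⟨s, fun N _ _ ν hν => ?_⟩
  obtain ⟨g, hg⟩ := EvalCoker.exists_lift R p
    (sum_op_smul_eq_zero_of_sum_ctmul_eq_zero ((vanishesIn_iff hmA).1 hν))
  simpa only [hg] using hs.map_left g fun k => A.monotone (Nat.zero_le s) (hm k)

theorem exists_countablyGenerated_vanishesIn
    (h : ∀ A : Submodule R M, CountablyGenerated R A → Module.Projective R A) (m : κ → M) :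
    ∃ A : Submodule R M, CountablyGenerated R A ∧ (∀ k, m k ∈ A) ∧
      ∀ (N : ModuleCat Rᵐᵒᵖ) (ν : κ → N),
        VanishesIn ν m (⊤ : Submodule R M) → VanishesIn ν m A := by
  let C : Set (Submodule R M) := {A | CountablyGenerated R A ∧ ∀ k, m k ∈ A}
  let V : Submodule R M → Set (Σ N : ModuleCat Rᵐᵒᵖ, κ → N) := fun A => {w | VanishesIn w.2 m A}
  have hC : C.Nonempty := ⟨Submodule.span R (Set.range m),
    ⟨Set.range m, (Set.finite_range m).countable, rfl⟩, fun k => Submodule.subset_span ⟨k, rfl⟩⟩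
  have hext : ∀ A ∈ C, ∀ w ∈ V ⊤, ∃ B ∈ C, A ≤ B ∧ w ∈ V B := by
    rintro A ⟨hcg, hm⟩ w hw
    obtain ⟨F, -, hF⟩ := VanishesIn.exists_finset hw
    exact ⟨A ⊔ Submodule.span R F, ⟨hcg.sup_span_finset F, fun k => Submodule.mem_sup_left (hm k)⟩,
      le_sup_left, hF.mono le_sup_right⟩
  have hstab : ∀ A : ℕ →o Submodule R M, (∀ n, A n ∈ C) → ∃ s, V (⨆ n, A n) ⊆ V (A s) := by
    intro A hA
    have := h _ (countablyGenerated_iSup fun n => (hA n).1)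
    obtain ⟨s, hs⟩ := exists_vanishesIn_of_iSup_of_projective A (hA 0).2
    exact ⟨s, fun w hw => hs w.1 w.2 hw⟩
  have hV : Monotone V := fun A B hAB w hw => VanishesIn.mono hAB hw
  obtain ⟨A, ⟨hcg, hm⟩, hA⟩ := exists_subset_of_chain_stabilizes hV hC hext hstab
  exact ⟨A, hcg, hm, fun N ν hν => @hA ⟨N, ν⟩ hν⟩

end Aleph1Projective

/-- Over any ring, every `ℵ₁`-projective module (every countably generated submodule is
projective) is Mittag-Leffler. -/
theorem mittagLeffler_of_aleph1Projective (R M : Type) [Ring R] [AddCommGroup M] [Module R M]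
    (h : ∀ A : Submodule R M, CountablyGenerated R A → Module.Projective R ↥A) :
    IsMittagLeffler R M := by
  intro ι N
  rw [injective_iff_map_eq_zero]
  intro x hx
  obtain ⟨d, n, m, rfl⟩ := exists_eq_sum_ctmul x
  obtain ⟨A, hcg, hmA, hA⟩ := exists_countablyGenerated_vanishesIn h m
  have := h A hcg
  let xA := ∑ k, ctmul R (∀ i, N i) A (n k) ⟨m k, hmA k⟩
  have hxA : ctCanonical R (fun i => N i) A xA = 0 := funext fun i => by
    have hi : VanishesIn (fun k => n k i) m (⊤ : Submodule R M) :=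
      vanishesIn_top_iff.2 (by simpa [map_sum] using congrFun hx i)
    simpa [xA, map_sum] using (vanishesIn_iff hmA).1 (hA (N i) _ hi)
  have hx_eq : ∑ k, ctmul R (∀ i, N i) M (n k) (m k) = ctmapRight R _ A.subtype xA := by
    simp [xA, map_sum]
  rw [hx_eq, (injective_iff_map_eq_zero _).1 (isMittagLeffler_of_projective ι N) xA hxA, map_zero]
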